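/- For any matroid M on a finite set S and any U ⊆ S, the map φ_U on the rank-preserving weak order of matroids on S, defined by φ_U(M) = M|U □ M/U, is a closure operator: it is idempotent, order-preserving, and satisfies M ≤ φ_U(M). Moreover, M is φ_U-closed if and only if U is a free separator of M, i.e., M = M|U □ M/U. -/

import Mathlib

/-!
Writing `F = M|U □ M/U`, a set `B ⊆ S` is a base of `F` iff `|B| = ρ(M)`, `B ∩ U` is independent
in `M` and `B ∪ U` spans `M` (rank is additive over `M|U` and `M/U`). Every base of `M` satisfies
these conditions, and they are monotone in `M` for the weak order. Conversely every base of `F`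
meets `U` in an `M`-independent set and together with `U` spans `M`; hence `M` and `F` have the
same independent subsets of `U` and the same spanning supersets of `U`, so `F|U = M|U` and
`F/U = M/U`, which is idempotence. The free product is determined by its factors, which gives the
characterisation of closed matroids.
-/

open Matroid

variable {α : Type*}

/-- The contraction `M / C` of a matroid by a set, defined as the dual of the
deletion (restriction to the complement) of the dual. Its ground set is `M.E \ C`. -/
def Matroid.con (M : Matroid α) (C : Set α) : Matroid α := (M✶ ↾ (M.E \ C))✶

/-- The rank `ρ(M)` of a matroid (as a value in `ℕ∞`): the common cardinality of its bases. -/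
noncomputable def Matroid.erank (M : Matroid α) : ℕ∞ := ⨆ B ∈ {B | M.IsBase B}, B.encard

/-- The rank function `ρ_M(X)` of a matroid: the rank of the restriction to `X`. -/
noncomputable def Matroid.rnk (M : Matroid α) (X : Set α) : ℕ∞ := (M ↾ X).erank

/-- `IsFreeProduct M N P` says that `P` is the free product `M □ N`: its ground set is
`M.E ∪ N.E`, and its bases are exactly the sets `B ⊆ M.E ∪ N.E` of cardinality
`ρ(M) + ρ(N)` such that `B ∩ M.E` is independent in `M` and `B ∩ N.E` spans `N`. -/
def IsFreeProduct (M N P : Matroid α) : Prop :=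
  P.E = M.E ∪ N.E ∧ ∀ B : Set α,
    (P.IsBase B ↔ B ⊆ M.E ∪ N.E ∧ B.encard = M.erank + N.erank ∧
      M.Indep (B ∩ M.E) ∧ N.Spanning (B ∩ N.E))

/-- The rank-preserving weak order on matroids: `M ≤ N` iff `M` and `N` have the same
ground set and every base of `M` is a base of `N`. -/
def weakLE (M N : Matroid α) : Prop := M.E = N.E ∧ ∀ B, M.IsBase B → N.IsBase B

open Set

namespace Matroid

variable {M : Matroid α} {U J K : Set α}

theorem con_eq_contract (M : Matroid α) (C : Set α) : M.con C = M ／ C := rfl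

theorem erank_eq_eRank (M : Matroid α) : M.erank = M.eRank := by
  obtain ⟨B, hB⟩ := M.exists_isBase
  rw [← hB.encard_eq_eRank, erank]
  exact le_antisymm (iSup₂_le fun B' hB' ↦ (hB'.encard_eq_encard_of_isBase hB).le)
    (le_iSup₂ (f := fun B' (_ : M.IsBase B') ↦ B'.encard) B hB)

theorem isBase_iff_indep_spanning : M.IsBase K ↔ M.Indep K ∧ M.Spanning K :=
  ⟨fun h ↦ ⟨h.indep, h.spanning⟩, fun h ↦ h.1.isBase_of_spanning h.2⟩

theorem IsBasis.spanning_union_iff (hJ : M.IsBasis J U) (hK : K ⊆ M.E) :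
    M.Spanning (K ∪ J) ↔ M.Spanning (K ∪ U) := by
  rw [spanning_iff_closure_eq (union_subset hK hJ.indep.subset_ground),
    spanning_iff_closure_eq (union_subset hK hJ.subset_ground),
    closure_union_congr_right hJ.closure_eq_closure]

theorem IsBasis.contract_isBase_iff (hJ : M.IsBasis J U) :
    (M ／ U).IsBase K ↔ M.IsBase (K ∪ J) ∧ Disjoint K U := by
  rw [isBase_iff_indep_spanning, isBase_iff_indep_spanning, hJ.contract_indep_iff,
    contract_spanning_iff hJ.subset_ground, disjoint_comm]
  constructor
  · rintro ⟨⟨hKJ, hdisj⟩, hKU, -⟩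
    exact ⟨⟨hKJ, (hJ.spanning_union_iff (subset_union_left.trans hKJ.subset_ground)).2 hKU⟩,
      hdisj⟩
  · rintro ⟨⟨hKJ, hKU⟩, hdisj⟩
    exact ⟨⟨hKJ, hdisj⟩,
      (hJ.spanning_union_iff (subset_union_left.trans hKJ.subset_ground)).1 hKU, hdisj⟩

theorem eRk_add_eRank_contract (hU : U ⊆ M.E) : M.eRk U + (M ／ U).eRank = M.eRank := by
  obtain ⟨J, hJ⟩ := M.exists_isBasis U
  obtain ⟨K, hK⟩ := (M ／ U).exists_isBase
  obtain ⟨hKJ, hdisj⟩ := hJ.contract_isBase_iff.1 hK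
  rw [← hJ.encard_eq_eRk, ← hK.encard_eq_eRank, ← hKJ.encard_eq_eRank,
    encard_union_eq (hdisj.mono_right hJ.subset), add_comm]

end Matroid

namespace weakLE

variable {M N : Matroid α} {I X : Set α}

theorem indep (h : weakLE M N) (hI : M.Indep I) : N.Indep I :=
  have ⟨B, hB, hIB⟩ := hI.exists_isBase_superset
  (h.2 B hB).indep.subset hIB

theorem spanning (h : weakLE M N) (hX : M.Spanning X) : N.Spanning X :=
  have ⟨B, hB, hBX⟩ := hX.exists_isBase_subset
  spanning_iff_exists_isBase_subset'.2 ⟨⟨B, h.2 B hB, hBX⟩, h.1 ▸ hX.subset_ground⟩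

theorem eRank_eq (h : weakLE M N) : M.eRank = N.eRank :=
  have ⟨B, hB⟩ := M.exists_isBase
  hB.encard_eq_eRank.symm.trans (h.2 B hB).encard_eq_eRank

end weakLE

namespace IsFreeProduct

variable {M N P Q F FM FN : Matroid α} {U B : Set α}

theorem unique (hP : IsFreeProduct M N P) (hQ : IsFreeProduct M N Q) : P = Q :=
  ext_isBase (hP.1.trans hQ.1.symm) fun B _ ↦ (hP.2 B).trans (hQ.2 B).symm

theorem ground_eq (hF : IsFreeProduct (M ↾ U) (M.con U) F) (hU : U ⊆ M.E) : F.E = M.E := by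
  rw [hF.1, restrict_ground_eq, con_eq_contract, contract_ground, union_sdiff_cancel hU]

theorem isBase_iff (hF : IsFreeProduct (M ↾ U) (M.con U) F) (hU : U ⊆ M.E) :
    F.IsBase B ↔ B ⊆ M.E ∧ B.encard = M.eRank ∧ M.Indep (B ∩ U) ∧ M.Spanning (B ∪ U) := by
  rw [hF.2 B, ← hF.1, hF.ground_eq hU, erank_eq_eRank, erank_eq_eRank, con_eq_contract,
    eRank_restrict, eRk_add_eRank_contract hU, restrict_ground_eq, restrict_indep_iff,
    and_iff_left inter_subset_right, contract_ground, contract_spanning_iff hU,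
    and_iff_left (disjoint_sdiff_left.mono_left inter_subset_right)]
  refine and_congr_right fun hB ↦ ?_
  rw [← inter_sdiff_assoc, inter_eq_left.2 hB, sdiff_union_self]

theorem le (hF : IsFreeProduct (M ↾ U) (M.con U) F) (hU : U ⊆ M.E) : weakLE M F := by
  refine ⟨(hF.ground_eq hU).symm, fun B hB ↦ (hF.isBase_iff hU).2 ?_⟩
  exact ⟨hB.subset_ground, hB.encard_eq_eRank, hB.indep.inter_right U,
    hB.spanning.superset subset_union_left (union_subset hB.subset_ground hU)⟩

theorem mono (hFM : IsFreeProduct (M ↾ U) (M.con U) FM) (hFN : IsFreeProduct (N ↾ U) (N.con U) FN)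
    (hU : U ⊆ M.E) (hMN : weakLE M N) : weakLE FM FN := by
  have hUN : U ⊆ N.E := hMN.1 ▸ hU
  refine ⟨by rw [hFM.ground_eq hU, hFN.ground_eq hUN, hMN.1], fun B hB ↦ ?_⟩
  obtain ⟨hBE, hcard, hind, hsp⟩ := (hFM.isBase_iff hU).1 hB
  exact (hFN.isBase_iff hUN).2
    ⟨hMN.1 ▸ hBE, hcard.trans hMN.eRank_eq, hMN.indep hind, hMN.spanning hsp⟩

theorem restrict_eq (hF : IsFreeProduct (M ↾ U) (M.con U) F) (hU : U ⊆ M.E) : F ↾ U = M ↾ U := by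
  refine ext_indep rfl fun I _ ↦ ?_
  rw [restrict_indep_iff, restrict_indep_iff, and_congr_left_iff]
  refine fun hIU ↦ ⟨fun hI ↦ ?_, (hF.le hU).indep⟩
  obtain ⟨B, hB, hIB⟩ := hI.exists_isBase_superset
  exact ((hF.isBase_iff hU).1 hB).2.2.1.subset (subset_inter hIB hIU)

theorem con_eq (hF : IsFreeProduct (M ↾ U) (M.con U) F) (hU : U ⊆ M.E) :
    F.con U = M.con U := by
  have hFE := hF.ground_eq hU
  rw [con_eq_contract, con_eq_contract]
  refine ext_spanning (by rw [contract_ground, contract_ground, hFE]) fun X _ ↦ ?_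
  rw [contract_spanning_iff (hFE ▸ hU), contract_spanning_iff hU, and_congr_left_iff]
  refine fun _ ↦ ⟨fun hXU ↦ ?_, (hF.le hU).spanning⟩
  obtain ⟨B, hB, hBX⟩ := hXU.exists_isBase_subset
  exact ((hF.isBase_iff hU).1 hB).2.2.2.superset (union_subset hBX subset_union_right)
    (hFE ▸ hXU.subset_ground)

theorem restrict_con_self (hF : IsFreeProduct (M ↾ U) (M.con U) F) (hU : U ⊆ M.E) :
    IsFreeProduct (F ↾ U) (F.con U) F := by
  rwa [hF.restrict_eq hU, hF.con_eq hU]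

end IsFreeProduct

theorem phiU_closure_operator_general (S : Set α) (U : Set α) (hU : U ⊆ S) :
    -- extensive
    (∀ M F : Matroid α, M.E = S → IsFreeProduct (M ↾ U) (M.con U) F → weakLE M F) ∧
    -- order-preserving
    (∀ M N FM FN : Matroid α, M.E = S → N.E = S →
      IsFreeProduct (M ↾ U) (M.con U) FM → IsFreeProduct (N ↾ U) (N.con U) FN →
      weakLE M N → weakLE FM FN) ∧
    -- idempotent
    (∀ M F : Matroid α, M.E = S → IsFreeProduct (M ↾ U) (M.con U) F →
      IsFreeProduct (F ↾ U) (F.con U) F) ∧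
    -- closed iff free separator
    (∀ M F : Matroid α, M.E = S → IsFreeProduct (M ↾ U) (M.con U) F →
      (M = F ↔ IsFreeProduct (M ↾ U) (M.con U) M)) := by
  refine ⟨fun M F hME hF ↦ hF.le (hME ▸ hU),
    fun M N FM FN hME _ hFM hFN hMN ↦ hFM.mono hFN (hME ▸ hU) hMN,
    fun M F hME hF ↦ hF.restrict_con_self (hME ▸ hU),
    fun M F _ hF ↦ ⟨by rintro rfl; exact hF, fun hM ↦ hM.unique hF⟩⟩

/-- for matroids on a fixed finite set `S` and `U ⊆ S`, the map
`φ_U : M ↦ M|U □ M/U` is a closure operator for the rank-preserving weak order: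
it is extensive (`M ≤ φ_U(M)`), order-preserving, and idempotent; moreover `M` is
`φ_U`-closed iff `U` is a free separator of `M`, i.e. iff `M = M|U □ M/U`.
(The free product `φ_U(M)` is represented by a matroid `F` with
`IsFreeProduct (M ↾ U) (M.con U) F`.) -/
theorem phiU_closure_operator (S : Set α) (hS : S.Finite) (U : Set α) (hU : U ⊆ S) :
    -- extensive
    (∀ M F : Matroid α, M.E = S → IsFreeProduct (M ↾ U) (M.con U) F → weakLE M F) ∧
    -- order-preserving
    (∀ M N FM FN : Matroid α, M.E = S → N.E = S →
      IsFreeProduct (M ↾ U) (M.con U) FM → IsFreeProduct (N ↾ U) (N.con U) FN →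
      weakLE M N → weakLE FM FN) ∧
    -- idempotent
    (∀ M F : Matroid α, M.E = S → IsFreeProduct (M ↾ U) (M.con U) F →
      IsFreeProduct (F ↾ U) (F.con U) F) ∧
    -- closed iff free separator
    (∀ M F : Matroid α, M.E = S → IsFreeProduct (M ↾ U) (M.con U) F →
      (M = F ↔ IsFreeProduct (M ↾ U) (M.con U) M)) :=
  phiU_closure_operator_general S U hU
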